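/- Let (X_n) be a Markov chain with transition kernel P on a measurable space S, ψ : S → ℝ bounded, Δ > 0, p ≥ 1 an integer, and L, L², …, L^p linear operators applied to ψ yielding bounded functions. Suppose the one-step expansion E[ψ(X_{n+1}) | X_n] = ψ(X_n) + Σ_{k=1}^{p} (Δ^k / k!) (L^k ψ)(X_n) + ρ_n holds with |E[ρ_n]| ≤ K Δ^{p+1}, and similarly for each of L ψ, …, L^{p-1} ψ in place of ψ (with correspondingly truncated expansions and error O(Δ^{p+2-k}) for L^{k-1}ψ). If moreover Lψ = φ - φ̄ for a bounded φ and real φ̄, then | (1/N) Σ_{n=0}^{N-1} E[φ(X_n)] - φ̄ | ≤ C ( Δ^p + 1/(NΔ) ) for a constant C independent of Δ and N. -/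

import Mathlib

/-!
Integrating the one-step expansion of `Lʲψ` and summing over `n < N` telescopes to
`∑_{k ≥ 1} Δᵏ/k! · Q_{j+k} = E[Lʲψ(X_N)] - E[Lʲψ(X_0)] - ∑ₙ E[ρ_{j,n}]`, where
`Q_l = ∑_{n<N} E[(Lˡψ)(X_n)]`. The `k = 1` term isolates `Δ · Q_{j+1}`; the boundary terms are
`O(1)`, the remainders `O(N Δ^{p+1-j})`, and the terms with `k ≥ 2` are controlled by the
bounds already proved for `Q_{j+k}`. Backward induction from `l = p` down to `l = 1` gives
`Δ |Q_l| ≤ C (N Δ^{p+2-l} + 1)`, and `Q_1 = ∑ₙ E[φ(X_n)] - N φ̄` by the Poisson equation.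
-/

open MeasureTheory Finset

def biasConst (Cb K : ℝ) (p : ℕ) : ℕ → ℝ
  | 0 => 2 * Cb + K
  | d + 1 => 2 * Cb + K + p * biasConst Cb K p d

lemma biasConst_nonneg {Cb K : ℝ} (hCb : 0 ≤ Cb) (hK : 0 ≤ K) (p : ℕ) :
    ∀ d, 0 ≤ biasConst Cb K p d
  | 0 => by rw [biasConst]; positivity
  | d + 1 => by have := biasConst_nonneg hCb hK p d; rw [biasConst]; positivity

lemma abs_sum_le_card_mul {ι : Type*} {s : Finset ι} {f : ι → ℝ} {C : ℝ}
    (h : ∀ i ∈ s, |f i| ≤ C) : |∑ i ∈ s, f i| ≤ #s * C :=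
  calc |∑ i ∈ s, f i| ≤ ∑ i ∈ s, |f i| := abs_sum_le_sum_abs _ _
    _ ≤ #s • C := sum_le_card_nsmul _ _ _ h
    _ = #s * C := nsmul_eq_mul _ _

lemma sum_mul_sum_range_eq_sub_of_succ_eq {b r c : ℕ → ℝ} {u : ℕ → ℕ → ℝ} {s : Finset ℕ}
    (h : ∀ n, b (n + 1) = b n + ∑ k ∈ s, c k * u k n + r n) (N : ℕ) :
    ∑ k ∈ s, c k * ∑ n ∈ range N, u k n = b N - b 0 - ∑ n ∈ range N, r n := by
  rw [eq_sub_iff_add_eq, ← sum_range_sub b N]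
  simp_rw [mul_sum]
  rw [sum_comm, ← sum_add_distrib]
  exact sum_congr rfl fun n _ => by rw [h n]; ring

lemma pow_succ_mul_abs_le_of_mul_abs_le {Δ B c x : ℝ} {e : ℕ} (hΔ0 : 0 ≤ Δ) (hΔ1 : Δ ≤ 1)
    (hB : 0 ≤ B) (h : Δ * |x| ≤ B * (c * Δ ^ e + 1)) (k : ℕ) :
    Δ ^ (k + 1) * |x| ≤ B * (c * Δ ^ (e + k) + 1) :=
  calc Δ ^ (k + 1) * |x| = Δ ^ k * (Δ * |x|) := by ring
    _ ≤ Δ ^ k * (B * (c * Δ ^ e + 1)) := mul_le_mul_of_nonneg_left h (pow_nonneg hΔ0 k)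
    _ = B * (c * Δ ^ (e + k) + Δ ^ k) := by ring
    _ ≤ B * (c * Δ ^ (e + k) + 1) := by gcongr; exact pow_le_one₀ hΔ0 hΔ1

section Recurrence

variable {Δ Cb K : ℝ} {p N : ℕ} {a : ℕ → ℕ → ℝ}

lemma mul_abs_sum_succ_le {B : ℝ} {i : ℕ} {r : ℕ → ℝ} (hΔ0 : 0 < Δ) (hΔ1 : Δ ≤ 1)
    (hK : 0 ≤ K) (hB : 0 ≤ B) (hi : i < p) (ha : ∀ n, |a i n| ≤ Cb)
    (hr : ∀ n, |r n| ≤ K * Δ ^ (p + 1 - i))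
    (hrec : ∀ n,
      a i (n + 1) = a i n + ∑ k ∈ Icc 1 (p - i), Δ ^ k / k.factorial * a (i + k) n + r n)
    (hhigher : ∀ l, i + 2 ≤ l → l ≤ p →
      Δ * |∑ n ∈ range N, a l n| ≤ B * (N * Δ ^ (p + 2 - l) + 1)) :
    Δ * |∑ n ∈ range N, a (i + 1) n| ≤ (2 * Cb + K + p * B) * (N * Δ ^ (p + 1 - i) + 1) := by
  have hCb : 0 ≤ Cb := (abs_nonneg _).trans (ha 0)
  have hsplit : Δ * ∑ n ∈ range N, a (i + 1) n = a i N - a i 0 - ∑ n ∈ range N, r n -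
      ∑ k ∈ Ioc 1 (p - i), Δ ^ k / k.factorial * ∑ n ∈ range N, a (i + k) n := by
    have h := sum_mul_sum_range_eq_sub_of_succ_eq hrec N
    rw [← add_sum_Ioc_eq_sum_Icc (by omega)] at h
    simp only [pow_one, Nat.factorial_one, Nat.cast_one, div_one] at h
    linarith
  have hends : |a i N - a i 0| ≤ 2 * Cb := (abs_sub _ _).trans (by linarith [ha N, ha 0])
  have hrem : |∑ n ∈ range N, r n| ≤ N * (K * Δ ^ (p + 1 - i)) := by
    simpa using abs_sum_le_card_mul (s := range N) fun n _ => hr n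
  have hhigh : |∑ k ∈ Ioc 1 (p - i), Δ ^ k / k.factorial * ∑ n ∈ range N, a (i + k) n| ≤
      p * (B * (N * Δ ^ (p + 1 - i) + 1)) := by
    refine (abs_sum_le_card_mul (C := B * (N * Δ ^ (p + 1 - i) + 1))
      fun k hk => ?_).trans ?_
    · obtain ⟨k, rfl⟩ : ∃ k', k = k' + 2 := ⟨k - 2, by grind⟩
      have hkp : i + (k + 2) ≤ p := by grind
      have h := pow_succ_mul_abs_le_of_mul_abs_le hΔ0.le hΔ1 hB
        (hhigher (i + (k + 2)) (by omega) hkp) (k + 1)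
      rw [show p + 2 - (i + (k + 2)) + (k + 1) = p + 1 - i by omega] at h
      calc |Δ ^ (k + 2) / (k + 2).factorial * ∑ n ∈ range N, a (i + (k + 2)) n|
          ≤ Δ ^ (k + 2) * |∑ n ∈ range N, a (i + (k + 2)) n| := by
            rw [abs_mul, abs_of_nonneg (by positivity)]
            gcongr
            exact div_le_self (by positivity) (by exact_mod_cast (k + 2).factorial_pos)
        _ ≤ B * (N * Δ ^ (p + 1 - i) + 1) := h
    · gcongr
      exact_mod_cast (Nat.card_Ioc 1 (p - i)).trans_le (by omega)
  have hx : 0 ≤ (N : ℝ) * Δ ^ (p + 1 - i) := by positivity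
  calc Δ * |∑ n ∈ range N, a (i + 1) n| = |Δ * ∑ n ∈ range N, a (i + 1) n| := by
        rw [abs_mul, abs_of_pos hΔ0]
    _ ≤ 2 * Cb + N * (K * Δ ^ (p + 1 - i)) + p * (B * (N * Δ ^ (p + 1 - i) + 1)) := by
        rw [hsplit]
        exact (abs_sub _ _).trans
          (add_le_add ((abs_sub _ _).trans (add_le_add hends hrem)) hhigh)
    _ ≤ (2 * Cb + K + p * B) * (N * Δ ^ (p + 1 - i) + 1) := by nlinarith [mul_nonneg hCb hx]

lemma mul_abs_sum_le_biasConst {r : ℕ → ℕ → ℝ} (hΔ0 : 0 < Δ) (hΔ1 : Δ ≤ 1) (hK : 0 ≤ K)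
    (ha : ∀ j ≤ p, ∀ n, |a j n| ≤ Cb) (hr : ∀ j < p, ∀ n, |r j n| ≤ K * Δ ^ (p + 1 - j))
    (hrec : ∀ j < p, ∀ n,
      a j (n + 1) = a j n + ∑ k ∈ Icc 1 (p - j), Δ ^ k / k.factorial * a (j + k) n + r j n)
    (d : ℕ) :
    ∀ l, 1 ≤ l → l ≤ p → p - l ≤ d →
      Δ * |∑ n ∈ range N, a l n| ≤ biasConst Cb K p d * (N * Δ ^ (p + 2 - l) + 1) := by
  have hCb : 0 ≤ Cb := (abs_nonneg _).trans (ha 0 (Nat.zero_le p) 0)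
  intro l hl1 hlp hld
  obtain ⟨i, rfl⟩ : ∃ i, l = i + 1 := ⟨l - 1, by omega⟩
  rw [show p + 2 - (i + 1) = p + 1 - i by omega]
  induction d generalizing i with
  | zero =>
    simpa [biasConst] using mul_abs_sum_succ_le (B := 0) hΔ0 hΔ1 hK le_rfl (by omega)
      (ha i (by omega)) (hr i (by omega)) (hrec i (by omega)) (fun l _ _ => by omega)
  | succ d ih =>
    refine mul_abs_sum_succ_le hΔ0 hΔ1 hK (biasConst_nonneg hCb hK p d) (by omega)
      (ha i (by omega)) (hr i (by omega)) (hrec i (by omega)) fun l hl hlp' => ?_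
    obtain ⟨i', rfl⟩ : ∃ i', l = i' + 1 := ⟨l - 1, by omega⟩
    rw [show p + 2 - (i' + 1) = p + 1 - i' by omega]
    exact ih i' (by omega) hlp' (by omega)

end Recurrence

section Integrals

variable {Ω S : Type*} {m : MeasurableSpace Ω} [MeasurableSpace S] {μ : Measure Ω}

lemma integral_eq_add_of_condExp_ae_eq [IsFiniteMeasure μ] {m' : MeasurableSpace Ω}
    (hm : m' ≤ m) {f g h : Ω → ℝ} (hg : Integrable g μ)
    (hfgh : μ[f | m'] =ᵐ[μ] fun ω => g ω + h ω) :
    ∫ ω, f ω ∂μ = ∫ ω, g ω ∂μ + ∫ ω, h ω ∂μ := by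
  have hh : Integrable h μ :=
    ((integrable_condExp.congr hfgh).sub hg).congr (ae_of_all _ fun ω => by simp)
  rw [← integral_condExp hm, integral_congr_ae hfgh, integral_add hg hh]

lemma integrable_comp_of_abs_le [IsFiniteMeasure μ] {X : Ω → S} (hX : Measurable X)
    {f : S → ℝ} (hf : Measurable f) {C : ℝ} (hC : ∀ x, |f x| ≤ C) :
    Integrable (fun ω => f (X ω)) μ :=
  .of_bound (hf.comp hX).aestronglyMeasurable C (ae_of_all _ fun ω => hC (X ω))

lemma abs_integral_le_of_abs_le [IsProbabilityMeasure μ] {f : Ω → ℝ} {C : ℝ}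
    (hC : ∀ ω, |f ω| ≤ C) : |∫ ω, f ω ∂μ| ≤ C := by
  simpa using norm_integral_le_of_norm_le_const (μ := μ) (f := f) (ae_of_all _ hC)

lemma integral_comp_succ_eq_of_condExp [IsFiniteMeasure μ] {ℱ : Filtration ℕ m}
    {X : ℕ → Ω → S} (hX : ∀ n, Measurable (X n)) {L : ℕ → S → ℝ} {p : ℕ} {Cb : ℝ}
    (hL : ∀ j ≤ p, Measurable (L j)) (hLb : ∀ j ≤ p, ∀ x, |L j x| ≤ Cb) {c : ℕ → ℝ}
    {ρ : Ω → ℝ} {j n : ℕ} (hj : j ≤ p)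
    (hexp : μ[fun ω => L j (X (n + 1) ω) | ℱ n] =ᵐ[μ]
      fun ω => L j (X n ω) + ∑ k ∈ Icc 1 (p - j), c k * L (j + k) (X n ω) + ρ ω) :
    ∫ ω, L j (X (n + 1) ω) ∂μ = ∫ ω, L j (X n ω) ∂μ +
      ∑ k ∈ Icc 1 (p - j), c k * ∫ ω, L (j + k) (X n ω) ∂μ + ∫ ω, ρ ω ∂μ := by
  have hint : ∀ k ≤ p, Integrable (fun ω => L k (X n ω)) μ := fun k hk =>
    integrable_comp_of_abs_le (hX n) (hL k hk) (hLb k hk)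
  have hterms : ∀ k ∈ Icc 1 (p - j), Integrable (fun ω => c k * L (j + k) (X n ω)) μ :=
    fun k hk => (hint _ (by grind)).const_mul _
  have hsum := integrable_finsetSum _ hterms
  have hmain : Integrable
      (fun ω => L j (X n ω) + ∑ k ∈ Icc 1 (p - j), c k * L (j + k) (X n ω)) μ :=
    (hint j hj).add hsum
  rw [integral_eq_add_of_condExp_ae_eq (ℱ.le n) hmain hexp,
    integral_add (hint j hj) hsum, integral_finsetSum _ hterms]
  simp_rw [integral_const_mul]

end Integrals

lemma abs_inv_mul_le_of_mul_abs_le {Δ C x N : ℝ} {p : ℕ} (hΔ : 0 < Δ) (hN : 0 < N)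
    (h : Δ * |x| ≤ C * (N * Δ ^ (p + 1) + 1)) : |N⁻¹ * x| ≤ C * (Δ ^ p + 1 / (N * Δ)) := by
  have hC : C * (Δ ^ p + 1 / (N * Δ)) = (N * Δ)⁻¹ * (C * (N * Δ ^ (p + 1) + 1)) := by
    field_simp
    ring
  rw [hC, abs_mul, abs_of_pos (inv_pos.2 hN), mul_inv, mul_assoc]
  gcongr
  rwa [le_inv_mul_iff₀ hΔ]

theorem higher_order_bias_estimate_general {Ω S : Type*} {m : MeasurableSpace Ω}
    [MeasurableSpace S] (μ : Measure Ω) [IsProbabilityMeasure μ]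
    (F : ℝ → Filtration ℕ m) (X : ℝ → ℕ → Ω → S)
    (hXmeas : ∀ Δ n, Measurable (X Δ n))
    (p : ℕ) (hp : 1 ≤ p)
    (Lψ : ℕ → S → ℝ) (hLmeas : ∀ j ≤ p, Measurable (Lψ j))
    (φ : S → ℝ) (φbar : ℝ)
    (Cb : ℝ) (hbdd : ∀ j ≤ p, ∀ x, |Lψ j x| ≤ Cb)
    (hPoisson : Lψ 1 = fun x => φ x - φbar)
    (K : ℝ) (hK : 0 < K)
    (ρ : ℝ → ℕ → ℕ → Ω → ℝ)
    (hexp : ∀ Δ : ℝ, 0 < Δ → Δ < 1 → ∀ j ≤ p - 1, ∀ n : ℕ,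
      μ[fun ω => Lψ j (X Δ (n + 1) ω) | (F Δ) n] =ᵐ[μ]
        fun ω => Lψ j (X Δ n ω) +
          (∑ k ∈ Finset.Icc 1 (p - j),
            Δ ^ k / (Nat.factorial k : ℝ) * Lψ (j + k) (X Δ n ω)) +
          ρ Δ j n ω)
    (hρ : ∀ Δ : ℝ, 0 < Δ → Δ < 1 → ∀ j ≤ p - 1, ∀ n : ℕ,
      |∫ ω, ρ Δ j n ω ∂μ| ≤ K * Δ ^ (p + 1 - j)) :
    ∃ C : ℝ, ∀ Δ : ℝ, 0 < Δ → Δ < 1 → ∀ N : ℕ, 1 ≤ N →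
      |(N : ℝ)⁻¹ * (∑ n ∈ Finset.range N, ∫ ω, φ (X Δ n ω) ∂μ) - φbar| ≤
        C * (Δ ^ p + 1 / ((N : ℝ) * Δ)) := by
  refine ⟨biasConst Cb K p (p - 1), fun Δ hΔ0 hΔ1 N hN => ?_⟩
  have hQ := mul_abs_sum_le_biasConst (N := N) (a := fun j n => ∫ ω, Lψ j (X Δ n ω) ∂μ)
    (r := fun j n => ∫ ω, ρ Δ j n ω ∂μ) hΔ0 hΔ1.le hK.le
    (fun j hj n => abs_integral_le_of_abs_le fun ω => hbdd j hj _)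
    (fun j hj n => hρ Δ hΔ0 hΔ1 j (by omega) n)
    (fun j hj n => integral_comp_succ_eq_of_condExp (hXmeas Δ) hLmeas hbdd hj.le
      (hexp Δ hΔ0 hΔ1 j (by omega) n)) (p - 1) 1 le_rfl hp (by omega)
  have hφ : ∀ n, ∫ ω, φ (X Δ n ω) ∂μ = ∫ ω, Lψ 1 (X Δ n ω) ∂μ + φbar := fun n => by
    have hint := integrable_comp_of_abs_le (μ := μ) (hXmeas Δ n) (hLmeas 1 hp) (hbdd 1 hp)
    have hφL : φ = fun x => Lψ 1 x + φbar := funext fun x => by rw [hPoisson]; ring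
    simp only [hφL]
    rw [integral_add hint (integrable_const φbar)]
    simp
  have hN' : (0 : ℝ) < N := by exact_mod_cast hN
  have hcenter : (N : ℝ)⁻¹ * (∑ n ∈ range N, ∫ ω, φ (X Δ n ω) ∂μ) - φbar =
      (N : ℝ)⁻¹ * ∑ n ∈ range N, ∫ ω, Lψ 1 (X Δ n ω) ∂μ := by
    simp only [hφ, sum_add_distrib, sum_const, card_range, nsmul_eq_mul]
    field_simp
    ring
  rw [hcenter]
  rw [show p + 2 - 1 = p + 1 by omega] at hQ
  exact abs_inv_mul_le_of_mul_abs_le hΔ0 hN' hQ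

theorem higher_order_bias_estimate {Ω S : Type*} {m : MeasurableSpace Ω}
    [MeasurableSpace S] (μ : Measure Ω) [IsProbabilityMeasure μ]
    (F : ℝ → Filtration ℕ m) (X : ℝ → ℕ → Ω → S)
    (hXmeas : ∀ Δ n, Measurable (X Δ n))
    (p : ℕ) (hp : 1 ≤ p)
    (Lψ : ℕ → S → ℝ) (hLmeas : ∀ j ≤ p, Measurable (Lψ j))
    (φ : S → ℝ) (hφmeas : Measurable φ) (φbar : ℝ)
    (Cb : ℝ) (hbdd : ∀ j ≤ p, ∀ x, |Lψ j x| ≤ Cb)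
    (hφbdd : ∀ x, |φ x| ≤ Cb)
    (hPoisson : Lψ 1 = fun x => φ x - φbar)
    (K : ℝ) (hK : 0 < K)
    (ρ : ℝ → ℕ → ℕ → Ω → ℝ)
    (hexp : ∀ Δ : ℝ, 0 < Δ → Δ < 1 → ∀ j ≤ p - 1, ∀ n : ℕ,
      μ[fun ω => Lψ j (X Δ (n + 1) ω) | (F Δ) n] =ᵐ[μ]
        fun ω => Lψ j (X Δ n ω) +
          (∑ k ∈ Finset.Icc 1 (p - j),
            Δ ^ k / (Nat.factorial k : ℝ) * Lψ (j + k) (X Δ n ω)) +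
          ρ Δ j n ω)
    (hρ : ∀ Δ : ℝ, 0 < Δ → Δ < 1 → ∀ j ≤ p - 1, ∀ n : ℕ,
      |∫ ω, ρ Δ j n ω ∂μ| ≤ K * Δ ^ (p + 1 - j)) :
    ∃ C : ℝ, ∀ Δ : ℝ, 0 < Δ → Δ < 1 → ∀ N : ℕ, 1 ≤ N →
      |(N : ℝ)⁻¹ * (∑ n ∈ Finset.range N, ∫ ω, φ (X Δ n ω) ∂μ) - φbar| ≤
        C * (Δ ^ p + 1 / ((N : ℝ) * Δ)) :=
  higher_order_bias_estimate_general μ F X hXmeas p hp Lψ hLmeas φ φbar Cb hbdd hPoisson K hK ρ hexp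
    hρ
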